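/- Let n, m be positive integers, let f : ℝⁿ → ℝⁿ, g : ℝⁿ → (ℝᵐ →L[ℝ] ℝⁿ), and u : ℝⁿ → ℝᵐ be arbitrary maps, let h : ℝⁿ → ℝ be differentiable, and let α : ℝ → ℝ be an extended class K function. Suppose that for every z ∈ ℝⁿ, ⟪∇h(z), f(z) + g(z)(u(z))⟫ ≥ -α(h(z)). Then every differentiable curve x : ℝ → ℝⁿ satisfying x'(t) = f(x(t)) + g(x(t))(u(x(t))) for all t ≥ 0 and h(x(0)) ≥ 0 satisfies h(x(t)) ≥ 0 for all t ≥ 0; that is, the safe set S = {z ∈ ℝⁿ : h(z) ≥ 0} is forward invariant along the trajectory. -/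

import Mathlib

open Real Set

/-! Along the trajectory, `φ = h ∘ x` satisfies `φ' = ⟪∇h, ẋ⟫ ≥ -α(φ) ≥ 0` wherever `φ < 0`.
If `φ t < 0`, take the last time `s < t` with `φ s ≥ 0`: on `[s, t]` the function `φ` is
nondecreasing, so `φ t ≥ φ s ≥ 0`, a contradiction. -/

theorem exists_nonneg_forall_neg_Ioc {φ : ℝ → ℝ} {a t : ℝ} (hφ : ContinuousOn φ (Icc a t))
    (hat : a ≤ t) (ha : 0 ≤ φ a) (ht : φ t < 0) :
    ∃ s ∈ Ico a t, 0 ≤ φ s ∧ ∀ r ∈ Ioc s t, φ r < 0 := by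
  set Z := Icc a t ∩ φ ⁻¹' Ici 0
  have hZ : IsClosed Z := hφ.preimage_isClosed_of_isClosed isClosed_Icc isClosed_Ici
  have hZne : Z.Nonempty := ⟨a, ⟨le_rfl, hat⟩, ha⟩
  have hZbdd : BddAbove Z := ⟨t, fun s hs => hs.1.2⟩
  obtain ⟨⟨has, hst⟩, hs⟩ := hZ.csSup_mem hZne hZbdd
  refine ⟨sSup Z, ⟨has, hst.lt_of_ne ?_⟩, hs, fun r hr => ?_⟩
  · rintro hst
    exact absurd (hst ▸ hs : 0 ≤ φ t) ht.not_ge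
  · by_contra! hr'
    exact hr.1.not_ge (le_csSup hZbdd ⟨⟨has.trans hr.1.le, hr.2⟩, hr'⟩)

theorem nonneg_of_deriv_nonneg_of_neg {φ : ℝ → ℝ} {a : ℝ} (hcont : ContinuousOn φ (Ici a))
    (hdiff : DifferentiableOn ℝ φ (Ioi a)) (ha : 0 ≤ φ a)
    (hderiv : ∀ t, a < t → φ t < 0 → 0 ≤ deriv φ t) {t : ℝ} (ht : a ≤ t) : 0 ≤ φ t := by
  by_contra! hneg
  obtain ⟨s, ⟨has, hst⟩, hs, hlt⟩ :=
    exists_nonneg_forall_neg_Ioc (hcont.mono Icc_subset_Ici_self) ht ha hneg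
  have hmono : MonotoneOn φ (Icc s t) := by
    refine monotoneOn_of_deriv_nonneg (convex_Icc s t)
      (hcont.mono (Icc_subset_Ici_iff hst.le |>.mpr has)) ?_ ?_ <;> rw [interior_Icc]
    · exact hdiff.mono (Ioo_subset_Ioi_self.trans (Ioi_subset_Ioi has))
    · exact fun r hr => hderiv r (has.trans_lt hr.1) (hlt r (Ioo_subset_Ioc_self hr))
  have := hmono (left_mem_Icc.mpr hst.le) (right_mem_Icc.mpr hst.le) hst.le
  linarith

theorem HasGradientAt.comp_hasDerivAt {E : Type*} [NormedAddCommGroup E]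
    [InnerProductSpace ℝ E] [CompleteSpace E] {h : E → ℝ} {h' : E} {x : ℝ → E} {x' : E} {t : ℝ}
    (hh : HasGradientAt h h' (x t)) (hx : HasDerivAt x x' t) :
    HasDerivAt (h ∘ x) (inner ℝ h' x') t :=
  hh.hasFDerivAt.comp_hasDerivAt t hx

theorem nonneg_of_zeroing_barrier {E : Type*} [NormedAddCommGroup E] [InnerProductSpace ℝ E]
    [CompleteSpace E] {F : E → E} {h : E → ℝ} {α : ℝ → ℝ} (hh : Differentiable ℝ h)
    (hα : Monotone α) (hα0 : α 0 = 0) (hcbf : ∀ z, -α (h z) ≤ inner ℝ (gradient h z) (F z))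
    {x : ℝ → E} (hx : Differentiable ℝ x) (hode : ∀ t, 0 ≤ t → deriv x t = F (x t))
    (hinit : 0 ≤ h (x 0)) {t : ℝ} (ht : 0 ≤ t) : 0 ≤ h (x t) := by
  have hφ : Differentiable ℝ (h ∘ x) := hh.comp hx
  refine nonneg_of_deriv_nonneg_of_neg (φ := h ∘ x) hφ.continuous.continuousOn
    hφ.differentiableOn hinit (fun s hs hneg => ?_) ht
  have hderiv := ((hh (x s)).hasGradientAt.comp_hasDerivAt (hx s).hasDerivAt).deriv
  rw [hderiv, hode s hs.le]
  have : α (h (x s)) ≤ 0 := hα0 ▸ hα hneg.le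
  linarith [hcbf (x s)]

theorem cbf_forward_invariance_general
    (n m : ℕ)
    (f : EuclideanSpace ℝ (Fin n) → EuclideanSpace ℝ (Fin n))
    (g : EuclideanSpace ℝ (Fin n) → (EuclideanSpace ℝ (Fin m) →L[ℝ] EuclideanSpace ℝ (Fin n)))
    (u : EuclideanSpace ℝ (Fin n) → EuclideanSpace ℝ (Fin m))
    (h : EuclideanSpace ℝ (Fin n) → ℝ) (hhdiff : Differentiable ℝ h)
    (α : ℝ → ℝ) (hαmono : StrictMono α) (hα0 : α 0 = 0)
    (hcbf : ∀ z : EuclideanSpace ℝ (Fin n),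
      (inner ℝ (gradient h z) (f z + g z (u z)) : ℝ) ≥ -α (h z))
    (x : ℝ → EuclideanSpace ℝ (Fin n)) (hx : Differentiable ℝ x)
    (hode : ∀ t : ℝ, 0 ≤ t → deriv x t = f (x t) + g (x t) (u (x t)))
    (hinit : h (x 0) ≥ 0) :
    ∀ t : ℝ, 0 ≤ t → h (x t) ≥ 0 := fun _ ht =>
  nonneg_of_zeroing_barrier hhdiff hαmono.monotone hα0 hcbf hx hode hinit ht

/-- Forward invariance of the safe set (Theorem 2): if `h` is a differentiable
zeroing control barrier function, i.e. `⟪∇h(z), f(z) + g(z)(u(z))⟫ ≥ -α(h(z))`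
for an extended class K function `α`, then along any solution of
`ẋ = f(x) + g(x) u(x)` starting in `S = {z | h z ≥ 0}`, the state remains in `S`. -/
theorem cbf_forward_invariance
    (n m : ℕ) (hn : 0 < n) (hm : 0 < m)
    (f : EuclideanSpace ℝ (Fin n) → EuclideanSpace ℝ (Fin n))
    (g : EuclideanSpace ℝ (Fin n) → (EuclideanSpace ℝ (Fin m) →L[ℝ] EuclideanSpace ℝ (Fin n)))
    (u : EuclideanSpace ℝ (Fin n) → EuclideanSpace ℝ (Fin m))
    (h : EuclideanSpace ℝ (Fin n) → ℝ) (hhdiff : Differentiable ℝ h)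
    (α : ℝ → ℝ) (hαcont : Continuous α) (hαmono : StrictMono α) (hα0 : α 0 = 0)
    (hcbf : ∀ z : EuclideanSpace ℝ (Fin n),
      (inner ℝ (gradient h z) (f z + g z (u z)) : ℝ) ≥ -α (h z))
    (x : ℝ → EuclideanSpace ℝ (Fin n)) (hx : Differentiable ℝ x)
    (hode : ∀ t : ℝ, 0 ≤ t → deriv x t = f (x t) + g (x t) (u (x t)))
    (hinit : h (x 0) ≥ 0) :
    ∀ t : ℝ, 0 ≤ t → h (x t) ≥ 0 :=
  cbf_forward_invariance_general n m f g u h hhdiff α hαmono hα0 hcbf x hx hode hinit
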